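/- Per-round potential decrease for the exponentiated gradient update: let w_{k+1}ⁱ = wₖⁱ exp(η uₖⁱ)/Zₖ with Zₖ = Σⱼ wₖʲ exp(η uₖʲ). Then for any fixed probability vector y, D_KL(y‖w_{k+1}) − D_KL(y‖wₖ) = ln Zₖ − η⟨y, uₖ⟩, and consequently D_KL(y‖w_{k+1}) − D_KL(y‖wₖ) ≤ η(⟨wₖ, uₖ⟩ − ⟨y, uₖ⟩) + η². -/
import Mathlib

lemma exp_le_quad {x : ℝ} (hx0 : 0 ≤ x) (hx1 : x ≤ 1) :
    Real.exp x ≤ 1 + x + x ^ 2 := by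
  have h := Real.exp_bound (x := x) (by rw [abs_of_nonneg hx0]; exact hx1) (n := 2) (by norm_num)
  have h2 : |Real.exp x - (1 + x)| ≤ |x| ^ 2 * (3 / 4) := by
    convert h using 2
    · simp [Finset.sum_range_succ]
    · norm_num [Nat.factorial]
  rw [abs_of_nonneg hx0] at h2
  have := abs_le.mp h2
  nlinarith [this.2, sq_nonneg x]

/-- Per-round potential change for the exponentiated gradient update. -/
theorem eg_potential_step (M : ℕ) (hM : 1 ≤ M) (η : ℝ) (hη0 : 0 < η) (hη1 : η ≤ 1)
    (w w' u y : Fin M → ℝ)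
    (hw : ∀ i, 0 < w i) (hsw : ∑ i, w i = 1)
    (hu : ∀ i, 0 ≤ u i ∧ u i ≤ 1)
    (hy : ∀ i, 0 ≤ y i) (hsy : ∑ i, y i = 1)
    (Z : ℝ) (hZ : Z = ∑ j, w j * Real.exp (η * u j))
    (hupd : ∀ i, w' i = w i * Real.exp (η * u i) / Z) :
    ((∑ i, y i * Real.log (y i / w' i)) - ∑ i, y i * Real.log (y i / w i)
        = Real.log Z - η * ∑ i, y i * u i) ∧
    (∑ i, y i * Real.log (y i / w' i)) - (∑ i, y i * Real.log (y i / w i))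
        ≤ η * ((∑ i, w i * u i) - ∑ i, y i * u i) + η ^ 2 := by
  have hne : (Finset.univ : Finset (Fin M)).Nonempty := ⟨⟨0, hM⟩, Finset.mem_univ _⟩
  have hZpos : 0 < Z := by
    rw [hZ]
    exact Finset.sum_pos (fun i _ => by have := hw i; positivity) hne
  have key : ∀ i, y i * Real.log (y i / w' i) - y i * Real.log (y i / w i)
      = y i * (Real.log Z - η * u i) := by
    intro i
    rcases eq_or_lt_of_le (hy i) with h0 | hpos
    · simp [← h0]
    · have hwi := hw i
      have hw'i : 0 < w' i := by
        rw [hupd i]; positivity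
      rw [Real.log_div (ne_of_gt hpos) (ne_of_gt hw'i),
          Real.log_div (ne_of_gt hpos) (ne_of_gt hwi), hupd i,
          Real.log_div (by positivity) (ne_of_gt hZpos),
          Real.log_mul (ne_of_gt hwi) (Real.exp_ne_zero _), Real.log_exp]
      ring
  have eq1 : (∑ i, y i * Real.log (y i / w' i)) - ∑ i, y i * Real.log (y i / w i)
      = Real.log Z - η * ∑ i, y i * u i := by
    rw [← Finset.sum_sub_distrib]
    calc ∑ i, (y i * Real.log (y i / w' i) - y i * Real.log (y i / w i))
        = ∑ i, (y i * Real.log Z - η * (y i * u i)) := by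
          refine Finset.sum_congr rfl fun i _ => ?_
          rw [key i]; ring
      _ = (∑ i, y i) * Real.log Z - η * ∑ i, y i * u i := by
          rw [Finset.sum_sub_distrib, ← Finset.sum_mul, ← Finset.mul_sum]
      _ = Real.log Z - η * ∑ i, y i * u i := by rw [hsy, one_mul]
  refine ⟨eq1, ?_⟩
  rw [eq1]
  have hZle : Z ≤ 1 + η * (∑ i, w i * u i) + η ^ 2 := by
    rw [hZ]
    calc ∑ j, w j * Real.exp (η * u j)
        ≤ ∑ j, (w j + η * (w j * u j) + η ^ 2 * (w j * (u j) ^ 2)) := by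
          refine Finset.sum_le_sum fun j _ => ?_
          have hx0 : 0 ≤ η * u j := mul_nonneg hη0.le (hu j).1
          have hx1 : η * u j ≤ 1 := by
            calc η * u j ≤ 1 * 1 := mul_le_mul hη1 (hu j).2 (hu j).1 one_pos.le
              _ = 1 := one_mul 1
          have hq := exp_le_quad hx0 hx1
          nlinarith [(hw j).le, hq]
      _ = 1 + η * (∑ j, w j * u j) + η ^ 2 * ∑ j, w j * (u j) ^ 2 := by
          rw [Finset.sum_add_distrib, Finset.sum_add_distrib, ← Finset.mul_sum,
            ← Finset.mul_sum, hsw]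
      _ ≤ 1 + η * (∑ j, w j * u j) + η ^ 2 * 1 := by
          have : ∑ j, w j * (u j) ^ 2 ≤ ∑ j, w j := by
            refine Finset.sum_le_sum fun j _ => ?_
            have h1 : u j ^ 2 ≤ 1 := by nlinarith [(hu j).1, (hu j).2]
            calc w j * u j ^ 2 ≤ w j * 1 := mul_le_mul_of_nonneg_left h1 (hw j).le
              _ = w j := mul_one _
          nlinarith [sq_nonneg η]
      _ = 1 + η * (∑ j, w j * u j) + η ^ 2 := by ring
  have hlog : Real.log Z ≤ Z - 1 := Real.log_le_sub_one_of_pos hZpos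
  linarith
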